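/- arXiv:2012.01276 — 4 statements merged into one kernel-verified Lean document; each statement's English description precedes it below -/
import Mathlib

section
/- Let K be a finite-dimensional complex inner product space, let Π and Λ be orthogonal projections on K, let U = (2Π − I)(2Λ − I), and let Θ ∈ [0, π]. Then for every vector w ∈ K with Λw = 0, one has ‖P_Θ(U) Π w‖ ≤ (Θ/2)·‖w‖. -/
/-!
Since `Λ w = 0`, the reflection `2Λ - I` sends `w` to `-w`, so `U w = w - 2 Π w`, i.e.
`Π w = (w - U w) / 2`.
Writing `V` for the range of `P_Θ(U)` and `v = P_V (w - U w)`, one has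
`‖v‖² = Re ⟪v, w - U w⟫ = Re ⟪v - U⁻¹ v, w⟫ ≤ ‖U v - v‖ ‖w‖`.
Finally `V` is an orthogonal sum of eigenspaces of the unitary `U` whose eigenvalues `e^{iθ}`
satisfy `|e^{iθ} - 1| ≤ |θ| ≤ Θ`, so `‖U v - v‖ ≤ Θ ‖v‖` by Pythagoras; hence `‖v‖ ≤ Θ ‖w‖`.
-/

noncomputable section

def projL {K : Type*} [NormedAddCommGroup K] [InnerProductSpace ℂ K] [FiniteDimensional ℂ K]
    (S : Submodule ℂ K) : K →ₗ[ℂ] K :=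
  S.subtype ∘ₗ (S.orthogonalProjection).toLinearMap

/-- `phaseSpace U Θ` is the span of the eigenvectors of `U` with eigenvalue `e^{iθ}`
for `|θ| ≤ Θ`; the orthogonal projection onto it is `P_Θ(U)`. -/
def phaseSpace {K : Type*} [NormedAddCommGroup K] [InnerProductSpace ℂ K]
    (U : K →ₗ[ℂ] K) (Θ : ℝ) : Submodule ℂ K :=
  ⨆ θ : Set.Icc (-Θ) Θ, Module.End.eigenspace U (Complex.exp (Complex.I * (θ : ℝ)))

open scoped InnerProductSpace
open Module.End

theorem OrthogonalFamily.norm_sum_smul_le {ι 𝕜 E : Type*} [RCLike 𝕜] [NormedAddCommGroup E]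
    [InnerProductSpace 𝕜 E] {V : ι → Submodule 𝕜 E}
    (hV : OrthogonalFamily 𝕜 (fun i => V i) fun i => (V i).subtypeₗᵢ) (s : Finset ι)
    {a : ι → 𝕜} {c : ℝ} (hc : 0 ≤ c) (ha : ∀ i ∈ s, ‖a i‖ ≤ c) {v : ι → E}
    (hv : ∀ i, v i ∈ V i) :
    ‖∑ i ∈ s, a i • v i‖ ≤ c * ‖∑ i ∈ s, v i‖ := by
  have hsq : ‖∑ i ∈ s, a i • v i‖ ^ 2 ≤ (c * ‖∑ i ∈ s, v i‖) ^ 2 := by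
    have h1 := hV.norm_sum (fun i => a i • (⟨v i, hv i⟩ : V i)) s
    have h2 := hV.norm_sum (fun i => (⟨v i, hv i⟩ : V i)) s
    simp only [Submodule.coe_subtypeₗᵢ, Submodule.subtype_apply, Submodule.coe_smul] at h1 h2
    rw [h1, mul_pow, h2, Finset.mul_sum]
    refine Finset.sum_le_sum fun i hi => ?_
    rw [norm_smul, mul_pow, Submodule.coe_norm]
    gcongr
    exact ha i hi
  exact le_of_sq_le_sq hsq (by positivity)

theorem norm_starProjection_sub_map_le {𝕜 E : Type*} [RCLike 𝕜] [NormedAddCommGroup E]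
    [InnerProductSpace 𝕜 E] (V : Submodule 𝕜 E) [V.HasOrthogonalProjection]
    (R : E ≃ₗᵢ[𝕜] E) {c : ℝ} (hc : 0 ≤ c) (hR : ∀ v ∈ V, ‖R v - v‖ ≤ c * ‖v‖) (w : E) :
    ‖V.starProjection (w - R w)‖ ≤ c * ‖w‖ := by
  set v := V.starProjection (w - R w)
  have hshift : ⟪v, w - R w⟫_𝕜 = ⟪v - R.symm v, w⟫_𝕜 := by
    rw [inner_sub_right, inner_sub_left, R.symm.inner_map_eq_flip, R.symm_symm]
  have hnorm : ‖v - R.symm v‖ = ‖R v - v‖ := by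
    rw [← R.norm_map, map_sub, R.apply_symm_apply]
  have hsq : ‖v‖ ^ 2 ≤ c * ‖w‖ * ‖v‖ :=
    calc ‖v‖ ^ 2 = RCLike.re ⟪v, w - R w⟫_𝕜 := (V.re_inner_starProjection_eq_normSq _).symm
      _ ≤ ‖v - R.symm v‖ * ‖w‖ := hshift ▸ re_inner_le_norm _ _
      _ ≤ c * ‖v‖ * ‖w‖ := by
        rw [hnorm]
        gcongr
        exact hR v (V.starProjection_apply_mem _)
      _ = c * ‖w‖ * ‖v‖ := by ring
  rcases (norm_nonneg v).eq_or_lt with h0 | hpos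
  · rw [← h0]
    positivity
  · exact le_of_mul_le_mul_right (by rwa [← sq]) hpos

section Eigenspaces

variable {K : Type*} [NormedAddCommGroup K] [InnerProductSpace ℂ K] {U : K →ₗ[ℂ] K}

theorem orthogonalFamily_eigenspace_circle (hU : ∀ x y, ⟪U x, U y⟫_ℂ = ⟪x, y⟫_ℂ) :
    OrthogonalFamily ℂ (fun z : Circle => eigenspace U z)
      fun z => (eigenspace U z).subtypeₗᵢ := by
  refine OrthogonalFamily.of_pairwise fun z z' hzz' x hx y hy => inner_eq_zero_symm.1 ?_
  rw [mem_eigenspace_iff] at hx hy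
  have h := hU x y
  rw [hx, hy, inner_smul_left, inner_smul_right, ← mul_assoc] at h
  have hne : (starRingEnd ℂ) z * z' - 1 ≠ 0 := by
    rw [sub_ne_zero, ← Circle.coe_inv_eq_conj, ← Circle.coe_mul, Ne, Circle.coe_eq_one,
      inv_mul_eq_one]
    exact hzz'
  have h' : ((starRingEnd ℂ) z * z' - 1) * ⟪x, y⟫_ℂ = 0 := by rw [sub_one_mul, h, sub_self]
  exact (mul_eq_zero.1 h').resolve_left hne

theorem norm_map_sub_self_le_of_mem_iSup_eigenspace (hU : ∀ x y, ⟪U x, U y⟫_ℂ = ⟪x, y⟫_ℂ)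
    {c : ℝ} (hc : 0 ≤ c) {v : K}
    (hv : v ∈ ⨆ z : {z : Circle // ‖(z : ℂ) - 1‖ ≤ c}, eigenspace U (z : ℂ)) :
    ‖U v - v‖ ≤ c * ‖v‖ := by
  obtain ⟨f, hf, rfl⟩ := (Submodule.mem_iSup_iff_exists_finsupp _ _).1 hv
  have hUsum : U (f.sum fun _ x => x) - (f.sum fun _ x => x) =
      ∑ z ∈ f.support, (((z : Circle) : ℂ) - 1) • f z := by
    simp only [Finsupp.sum, map_sum, ← Finset.sum_sub_distrib, mem_eigenspace_iff.1 (hf _),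
      sub_smul, one_smul]
  rw [hUsum]
  exact ((orthogonalFamily_eigenspace_circle hU).comp Subtype.val_injective).norm_sum_smul_le
    _ hc (fun z _ => z.2) hf

theorem phaseSpace_le_iSup_eigenspace (U : K →ₗ[ℂ] K) (Θ : ℝ) :
    phaseSpace U Θ ≤ ⨆ z : {z : Circle // ‖(z : ℂ) - 1‖ ≤ Θ}, eigenspace U (z : ℂ) := by
  refine iSup_le fun θ => ?_
  have hz : ‖(Circle.exp θ : ℂ) - 1‖ ≤ Θ := by
    rw [Circle.coe_exp, mul_comm]
    exact Real.norm_exp_I_mul_ofReal_sub_one_le.trans (abs_le.2 θ.2)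
  convert le_iSup (fun z : {z : Circle // ‖(z : ℂ) - 1‖ ≤ Θ} => eigenspace U (z : ℂ)) ⟨_, hz⟩
    using 3
  rw [Circle.coe_exp, mul_comm]

end Eigenspaces

/-- **Effective spectral gap lemma.**  If `Π` and `Λ` are orthogonal projections on a
finite-dimensional complex inner product space, `U = (2Π − I)(2Λ − I)`, `Θ ∈ [0, π]`, and
`Λ w = 0`, then `‖P_Θ(U) Π w‖ ≤ (Θ/2)·‖w‖`. -/
theorem effective_spectral_gap
    {K : Type*} [NormedAddCommGroup K] [InnerProductSpace ℂ K] [FiniteDimensional ℂ K]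
    (S T : Submodule ℂ K) (Θ : ℝ) (hΘ : Θ ∈ Set.Icc (0 : ℝ) Real.pi)
    (U : K →ₗ[ℂ] K)
    (hU : U = (2 • projL S - LinearMap.id) ∘ₗ (2 • projL T - LinearMap.id))
    (w : K) (hw : projL T w = 0) :
    ‖projL (phaseSpace U Θ) (projL S w)‖ ≤ (Θ / 2) * ‖w‖ := by
  set R := T.reflection.trans S.reflection
  have hUR : ∀ x, U x = R x := fun x => by subst hU; rfl
  have hTw : T.reflection w = -w :=
    T.reflection_mem_subspace_orthogonalComplement_eq_neg (T.starProjection_apply_eq_zero_iff.1 hw)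
  have hSw : projL S w = (2 : ℂ)⁻¹ • (w - R w) := by
    rw [eq_inv_smul_iff₀ two_ne_zero, LinearIsometryEquiv.trans_apply, hTw, map_neg,
      S.reflection_apply, two_smul, two_smul]
    simp [projL]
  have hgap : ∀ v ∈ phaseSpace U Θ, ‖R v - v‖ ≤ Θ * ‖v‖ := fun v hv => by
    rw [← hUR]
    exact norm_map_sub_self_le_of_mem_iSup_eigenspace
      (fun x y => by simp only [hUR, R.inner_map_map]) hΘ.1 (phaseSpace_le_iSup_eigenspace U Θ hv)
  calc ‖projL (phaseSpace U Θ) (projL S w)‖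
      = 2⁻¹ * ‖(phaseSpace U Θ).starProjection (w - R w)‖ := by
        rw [hSw, map_smul, norm_smul, norm_inv, RCLike.norm_two]; rfl
    _ ≤ 2⁻¹ * (Θ * ‖w‖) := by
        gcongr
        exact norm_starProjection_sub_map_le _ R hΘ.1 hgap w
    _ = Θ / 2 * ‖w‖ := by ring
end
end

section
/- Let P be a span program on [q]^m that decides a function f : X → {0,1}, where X ⊆ [q]^m. Then there exists a span program P† on [q]^m that decides the negation ¬f (i.e. every x ∈ X with f(x) = 0 has a positive witness in P† and every x ∈ X with f(x) = 1 has a negative witness in P†) and such that for every x ∈ X, w(P†, x) ≤ w(P, x). -/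
noncomputable section

/-- A span program `P = (H, V, τ, A)` on `[q]^m`:
finite-dimensional complex inner product spaces `H` and `V`, an orthogonal
decomposition `H = H_1 ⊕ ⋯ ⊕ H_m ⊕ H_true ⊕ H_false`, subspaces
`H_{j,a} ⊆ H_j` with `Σ_a H_{j,a} = H_j`, a target `τ ∈ V` and `A : H → V`. -/
structure SpanProgram (q m : ℕ) where
  H : Type
  V : Type
  [nH : NormedAddCommGroup H]
  [iH : InnerProductSpace ℂ H]
  [fH : FiniteDimensional ℂ H]
  [nV : NormedAddCommGroup V]
  [iV : InnerProductSpace ℂ V]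
  [fV : FiniteDimensional ℂ V]
  Hj : Fin m → Submodule ℂ H
  Htrue : Submodule ℂ H
  Hfalse : Submodule ℂ H
  ortho : ∀ i i' : Fin m ⊕ Bool, i ≠ i' →
    (Sum.elim Hj (fun b => if b then Htrue else Hfalse) i).IsOrtho
      (Sum.elim Hj (fun b => if b then Htrue else Hfalse) i')
  spans : (⨆ j, Hj j) ⊔ Htrue ⊔ Hfalse = ⊤
  Hja : Fin m → Fin q → Submodule ℂ H
  Hja_le : ∀ j a, Hja j a ≤ Hj j
  Hja_sup : ∀ j, (⨆ a, Hja j a) = Hj j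
  tau : V
  A : H →ₗ[ℂ] V

attribute [instance] SpanProgram.nH SpanProgram.iH SpanProgram.fH
attribute [instance] SpanProgram.nV SpanProgram.iV SpanProgram.fV

namespace SpanProgram

variable {q m : ℕ} (P : SpanProgram q m)

/-- `H(x) = H_{1,x_1} ⊕ ⋯ ⊕ H_{m,x_m} ⊕ H_true`. -/
def Hx (x : Fin m → Fin q) : Submodule ℂ P.H :=
  (⨆ j, P.Hja j (x j)) ⊔ P.Htrue

/-- `w` is a positive witness for `x`: `w ∈ H(x)` and `A w = τ`. -/
def PosWitness (x : Fin m → Fin q) (w : P.H) : Prop :=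
  w ∈ P.Hx x ∧ P.A w = P.tau

/-- `ω` is a negative witness for `x`: `ω(τ) = 1` and `ω ∘ A ∘ Π_{H(x)} = 0`. -/
def NegWitness (x : Fin m → Fin q) (ω : P.V →ₗ[ℂ] ℂ) : Prop :=
  ω P.tau = 1 ∧ ∀ h ∈ P.Hx x, ω (P.A h) = 0

def HasPos (x : Fin m → Fin q) : Prop := ∃ w, P.PosWitness x w

def HasNeg (x : Fin m → Fin q) : Prop := ∃ ω, P.NegWitness x ω

/-- positive witness size: `min{‖w‖² : w a positive witness for x}`. -/
def posSize (x : Fin m → Fin q) : ℝ :=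
  sInf {r : ℝ | ∃ w, P.PosWitness x w ∧ r = ‖w‖ ^ 2}

/-- negative witness size: `min{‖ω∘A‖² : ω a negative witness for x}`, where
`‖ω∘A‖` is the norm of (the Riesz representative of) the functional `ω∘A`. -/
def negSize (x : Fin m → Fin q) : ℝ :=
  sInf {r : ℝ | ∃ ω, P.NegWitness x ω ∧
    r = ‖LinearMap.toContinuousLinearMap (ω ∘ₗ P.A)‖ ^ 2}

open Classical in
/-- the witness size `w(P,x)`. -/
def witSize (x : Fin m → Fin q) : ℝ :=
  if P.HasPos x then P.posSize x else P.negSize x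

/-- `P` decides `f` on `X`: every `x ∈ X` with `f x = 1` has a positive witness and
every `x ∈ X` with `f x = 0` has a negative witness. -/
def Decides (X : Set (Fin m → Fin q)) (f : (Fin m → Fin q) → Bool) : Prop :=
  ∀ x ∈ X, (f x = true → P.HasPos x) ∧ (f x = false → P.HasNeg x)

end SpanProgram

/-!
The dual program `P†` lives on the same space `H`, with `H†_{j,a} = H_{j,a}ᗮ ⊓ H_j` and
`H†_true = H_false`, so that `H†(x) = H(x)ᗮ`. Its target space is the kernel `V†` of
`(c, h) ↦ c τ + A h` on `ℂ ⊕ H`, with `A† h = Π (0, h)` and `τ† = -Π (1, 0)` for the orthogonal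
projection `Π` onto `V†`.
A positive witness `w` of `P` gives the vector `(-1, w) ∈ V†`, and pairing with it is a negative
witness of `P†` with `ω ∘ A† = ⟪w, ·⟫`. A negative witness `ω` of `P` gives the Riesz
representative `w` of `ω ∘ A`; it lies in `H(x)ᗮ`, and `(1, w) ⊥ V†` says exactly `A† w = τ†`.
Both correspondences preserve the witness size.
-/

open InnerProductSpace Submodule

theorem Submodule.eq_orthogonal_of_isOrtho_of_sup_eq_top {𝕜 E : Type*} [RCLike 𝕜]
    [NormedAddCommGroup E] [InnerProductSpace 𝕜 E] {U V : Submodule 𝕜 E} [U.HasOrthogonalProjection]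
    (hUV : U ⟂ V) (hsup : U ⊔ V = ⊤) : V = Uᗮ :=
  eq_of_le_of_inf_le_of_sup_le hUV.symm
    (by rw [inf_comm, U.inf_orthogonal_eq_bot]; exact bot_le)
    (by rw [sup_comm V, hsup]; exact le_top)

namespace SpanProgram

variable {q m : ℕ}

section OfOrthogonalBlocks

variable {H V : Type} [NormedAddCommGroup H] [InnerProductSpace ℂ H] [FiniteDimensional ℂ H]
  [NormedAddCommGroup V] [InnerProductSpace ℂ V] [FiniteDimensional ℂ V]

abbrev ofOrthogonalBlocks (Hja : Fin m → Fin q → Submodule ℂ H) (Htrue : Submodule ℂ H)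
    (hHj : Pairwise fun j j' => (⨆ a, Hja j a) ⟂ (⨆ a, Hja j' a))
    (hHtrue : ∀ j, (⨆ a, Hja j a) ⟂ Htrue) (tau : V) (A : H →ₗ[ℂ] V) : SpanProgram q m where
  H := H
  V := V
  Hj j := ⨆ a, Hja j a
  Htrue := Htrue
  Hfalse := ((⨆ j, ⨆ a, Hja j a) ⊔ Htrue)ᗮ
  ortho := by
    have hfalse : ∀ K ≤ (⨆ j, ⨆ a, Hja j a) ⊔ Htrue, K ⟂ ((⨆ j, ⨆ a, Hja j a) ⊔ Htrue)ᗮ :=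
      fun K hK => (isOrtho_orthogonal_right _).mono_left hK
    have hj : ∀ j, (⨆ a, Hja j a) ≤ (⨆ j, ⨆ a, Hja j a) ⊔ Htrue :=
      fun j => (le_iSup (fun j => ⨆ a, Hja j a) j).trans le_sup_left
    rintro (j | _ | _) (j' | _ | _) hne <;>
      simp only [Sum.elim_inl, Sum.elim_inr, Bool.false_eq_true, ↓reduceIte]
    · exact hHj fun h => hne (congrArg _ h)
    · exact hfalse _ (hj j)
    · exact hHtrue j
    · exact (hfalse _ (hj j')).symm
    · exact absurd rfl hne
    · exact (hfalse _ le_sup_right).symm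
    · exact (hHtrue j').symm
    · exact hfalse _ le_sup_right
    · exact absurd rfl hne
  spans := sup_orthogonal_of_hasOrthogonalProjection
  Hja := Hja
  Hja_le j a := le_iSup (Hja j) a
  Hja_sup _ := rfl
  tau := tau
  A := A

end OfOrthogonalBlocks

variable (P : SpanProgram q m)

theorem isOrtho_Hj {j j' : Fin m} (h : j ≠ j') : P.Hj j ⟂ P.Hj j' :=
  P.ortho (.inl j) (.inl j') (by simpa using h)

theorem isOrtho_Hj_Htrue (j : Fin m) : P.Hj j ⟂ P.Htrue :=
  P.ortho (.inl j) (.inr true) (by simp)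

theorem isOrtho_Hj_Hfalse (j : Fin m) : P.Hj j ⟂ P.Hfalse :=
  P.ortho (.inl j) (.inr false) (by simp)

theorem isOrtho_Htrue_Hfalse : P.Htrue ⟂ P.Hfalse :=
  P.ortho (.inr true) (.inr false) (by simp)

theorem not_hasPos_of_hasNeg {x : Fin m → Fin q} (h : P.HasNeg x) : ¬P.HasPos x := by
  rintro ⟨w, hw, hAw⟩
  obtain ⟨ω, hτ, hω⟩ := h
  simpa [hAw, hτ] using hω w hw

theorem witSize_of_hasPos {x : Fin m → Fin q} (h : P.HasPos x) : P.witSize x = P.posSize x :=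
  if_pos h

theorem witSize_of_hasNeg {x : Fin m → Fin q} (h : P.HasNeg x) : P.witSize x = P.negSize x :=
  if_neg (P.not_hasPos_of_hasNeg h)

def dualV : Submodule ℂ (WithLp 2 (ℂ × P.H)) :=
  LinearMap.ker ((LinearMap.toSpanSingleton ℂ P.V P.tau).coprod P.A ∘ₗ
    (WithLp.linearEquiv 2 ℂ (ℂ × P.H)).toLinearMap)

theorem mem_dualV {v : WithLp 2 (ℂ × P.H)} :
    v ∈ P.dualV ↔ v.fst • P.tau + P.A v.snd = 0 := by
  simp [dualV]

def dualA : P.H →ₗ[ℂ] P.dualV :=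
  P.dualV.orthogonalProjectionOnto.toLinearMap ∘ₗ
    (WithLp.linearEquiv 2 ℂ (ℂ × P.H)).symm.toLinearMap ∘ₗ LinearMap.inr ℂ ℂ P.H

def dualTau : P.dualV := -P.dualV.orthogonalProjectionOnto (WithLp.toLp 2 (1, 0))

theorem inner_dualA (z : P.dualV) (h : P.H) :
    ⟪z, P.dualA h⟫_ℂ = ⟪(z : WithLp 2 (ℂ × P.H)), WithLp.toLp 2 (0, h)⟫_ℂ :=
  inner_orthogonalProjectionOnto_eq_of_mem_left z _

-- Reducible, like `ofOrthogonalBlocks`, so that instance search sees `P.dual.V = P.dualV`.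
abbrev dual : SpanProgram q m :=
  ofOrthogonalBlocks (fun j a => (P.Hja j a)ᗮ ⊓ P.Hj j) P.Hfalse
    (fun _ _ h => (P.isOrtho_Hj h).mono (iSup_le fun _ => inf_le_right)
      (iSup_le fun _ => inf_le_right))
    (fun j => (P.isOrtho_Hj_Hfalse j).mono_left (iSup_le fun _ => inf_le_right))
    P.dualTau P.dualA

theorem Hx_dual (x : Fin m → Fin q) : P.dual.Hx x = (P.Hx x)ᗮ := by
  show (⨆ j, (P.Hja j (x j))ᗮ ⊓ P.Hj j) ⊔ P.Hfalse = (P.Hx x)ᗮ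
  refine eq_orthogonal_of_isOrtho_of_sup_eq_top ?_ ?_
  · simp only [Hx, isOrtho_sup_left, isOrtho_sup_right, isOrtho_iSup_left, isOrtho_iSup_right]
    refine ⟨fun j' => ⟨fun j => ?_, (P.isOrtho_Hj_Htrue j').symm.mono_right inf_le_right⟩,
      fun j => (P.isOrtho_Hj_Hfalse j).mono_left (P.Hja_le j _), P.isOrtho_Htrue_Hfalse⟩
    obtain rfl | h := eq_or_ne j j'
    · exact (isOrtho_orthogonal_right _).mono_right inf_le_left
    · exact (P.isOrtho_Hj h).mono (P.Hja_le j _) inf_le_right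
  · have hHj : ⨆ j, P.Hj j = (⨆ j, P.Hja j (x j)) ⊔ ⨆ j, (P.Hja j (x j))ᗮ ⊓ P.Hj j := by
      rw [← iSup_sup_eq]
      exact iSup_congr fun j => (sup_orthogonal_inf_of_hasOrthogonalProjection (P.Hja_le j _)).symm
    rw [Hx, ← P.spans, hHj, sup_sup_sup_comm]
    simp only [sup_assoc]

theorem exists_negWitness_dual {x : Fin m → Fin q} {w : P.H} (hw : P.PosWitness x w) :
    ∃ ω, P.dual.NegWitness x ω ∧ ‖LinearMap.toContinuousLinearMap (ω ∘ₗ P.dual.A)‖ = ‖w‖ := by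
  obtain ⟨hwx, hAw⟩ := hw
  let z : P.dualV := ⟨WithLp.toLp 2 (-1, w), P.mem_dualV.2 (by simp [hAw])⟩
  have hzA : ∀ h, ⟪z, P.dualA h⟫_ℂ = ⟪w, h⟫_ℂ := fun h => by simp [inner_dualA P z h, z]
  have hcomp : LinearMap.toContinuousLinearMap ((innerSL ℂ z).toLinearMap ∘ₗ P.dual.A) =
      innerSL ℂ w :=
    ContinuousLinearMap.ext hzA
  refine ⟨(innerSL ℂ z).toLinearMap, ⟨?_, fun h hh => ?_⟩, by rw [hcomp, innerSL_apply_norm]⟩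
  · show ⟪z, P.dualTau⟫_ℂ = 1
    simp [dualTau, z]
  · rw [Hx_dual] at hh
    exact (hzA h).trans (hh w hwx)

theorem exists_posWitness_dual {x : Fin m → Fin q} {ω : P.V →ₗ[ℂ] ℂ} (hω : P.NegWitness x ω) :
    ∃ w, P.dual.PosWitness x w ∧ ‖w‖ = ‖LinearMap.toContinuousLinearMap (ω ∘ₗ P.A)‖ := by
  obtain ⟨hτ, hωx⟩ := hω
  let φ := LinearMap.toContinuousLinearMap (ω ∘ₗ P.A)
  let w := (toDual ℂ P.H).symm φ
  have hw : ∀ h, ⟪w, h⟫_ℂ = ω (P.A h) := fun h => toDual_symm_apply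
  refine ⟨w, ⟨?_, ?_⟩, (toDual ℂ P.H).symm.norm_map φ⟩
  · rw [Hx_dual]
    intro u hu
    rw [← inner_conj_symm, hw, hωx u hu, map_zero]
  · have h1w : WithLp.toLp 2 (1, w) ∈ P.dualVᗮ := by
      refine (mem_orthogonal' _ _).2 fun v hv => ?_
      have hAv : P.A v.snd = -(v.fst • P.tau) := eq_neg_of_add_eq_zero_right (P.mem_dualV.1 hv)
      simp [hw, hAv, hτ]
    show P.dualV.orthogonalProjectionOnto (WithLp.toLp 2 (0, w)) = P.dualTau
    have : WithLp.toLp 2 ((0 : ℂ), w) = WithLp.toLp 2 (1, w) - WithLp.toLp 2 (1, 0) := by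
      simp [← WithLp.toLp_sub]
    rw [this, map_sub, orthogonalProjectionOnto_apply_of_mem_orthogonal h1w, zero_sub, dualTau]

theorem hasNeg_dual_of_hasPos {x : Fin m → Fin q} (h : P.HasPos x) : P.dual.HasNeg x :=
  let ⟨_, hw⟩ := h
  let ⟨ω, hω, _⟩ := P.exists_negWitness_dual hw
  ⟨ω, hω⟩

theorem hasPos_dual_of_hasNeg {x : Fin m → Fin q} (h : P.HasNeg x) : P.dual.HasPos x :=
  let ⟨_, hω⟩ := h
  let ⟨w, hw, _⟩ := P.exists_posWitness_dual hω
  ⟨w, hw⟩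

theorem negSize_dual_le_posSize {x : Fin m → Fin q} (h : P.HasPos x) :
    P.dual.negSize x ≤ P.posSize x := by
  obtain ⟨w, hw⟩ := h
  refine csInf_le_csInf ⟨0, ?_⟩ ⟨_, w, hw, rfl⟩ ?_
  · rintro r ⟨ω, -, rfl⟩
    positivity
  · rintro r ⟨w, hw, rfl⟩
    obtain ⟨ω, hω, hnorm⟩ := P.exists_negWitness_dual hw
    exact ⟨ω, hω, by rw [hnorm]⟩

theorem posSize_dual_le_negSize {x : Fin m → Fin q} (h : P.HasNeg x) :
    P.dual.posSize x ≤ P.negSize x := by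
  obtain ⟨ω, hω⟩ := h
  refine csInf_le_csInf ⟨0, ?_⟩ ⟨_, ω, hω, rfl⟩ ?_
  · rintro r ⟨w, -, rfl⟩
    positivity
  · rintro r ⟨ω, hω, rfl⟩
    obtain ⟨w, hw, hnorm⟩ := P.exists_posWitness_dual hω
    exact ⟨w, hw, by rw [hnorm]⟩

theorem witSize_dual_le {x : Fin m → Fin q} (h : P.HasPos x ∨ P.HasNeg x) :
    P.dual.witSize x ≤ P.witSize x := by
  rcases h with h | h
  · rw [witSize_of_hasNeg _ (P.hasNeg_dual_of_hasPos h), witSize_of_hasPos _ h]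
    exact P.negSize_dual_le_posSize h
  · rw [witSize_of_hasPos _ (P.hasPos_dual_of_hasNeg h), witSize_of_hasNeg _ h]
    exact P.posSize_dual_le_negSize h

theorem decides_dual {X : Set (Fin m → Fin q)} {f : (Fin m → Fin q) → Bool}
    (hP : P.Decides X f) : P.dual.Decides X (fun x => !f x) := fun x hx =>
  ⟨fun h => P.hasPos_dual_of_hasNeg ((hP x hx).2 (by simpa using h)),
    fun h => P.hasNeg_dual_of_hasPos ((hP x hx).1 (by simpa using h))⟩

end SpanProgram

theorem span_program_negation_general {q m : ℕ}
    (P : SpanProgram q m) (X : Set (Fin m → Fin q)) (f : (Fin m → Fin q) → Bool)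
    (hP : P.Decides X f) :
    ∃ Pd : SpanProgram q m,
      Pd.Decides X (fun x => !(f x)) ∧ ∀ x ∈ X, Pd.witSize x ≤ P.witSize x := by
  refine ⟨P.dual, P.decides_dual hP, fun x hx => P.witSize_dual_le ?_⟩
  cases hfx : f x
  exacts [.inr ((hP x hx).2 hfx), .inl ((hP x hx).1 hfx)]

theorem span_program_negation {q m : ℕ} (hq : 2 ≤ q) (hm : 1 ≤ m)
    (P : SpanProgram q m) (X : Set (Fin m → Fin q)) (f : (Fin m → Fin q) → Bool)
    (hP : P.Decides X f) :
    ∃ Pd : SpanProgram q m,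
      Pd.Decides X (fun x => !(f x)) ∧ ∀ x ∈ X, Pd.witSize x ≤ P.witSize x :=
  span_program_negation_general P X f hP
end
end

section
/- Let 𝒫 = ({u_{xj}}, {v_{xj}}) be a converting vector set from ρ to σ with max_{x∈X} w_+(𝒫, x) > 0 and max_{x∈X} w_−(𝒫, x) > 0. Then there exists a converting vector set 𝒫' from ρ to σ such that W(𝒫') ≤ W(𝒫) and max_{x∈X} w_+(𝒫', x) = max_{x∈X} w_−(𝒫', x). -/
/-!
Rescaling `u` by a real `c ≠ 0` and `v` by `c⁻¹` leaves every inner product `⟨u_{xj}|v_{yj}⟩`,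
hence the converting property, unchanged, while it multiplies the positive witness sizes by `c²`
and the negative ones by `c⁻²`. With `A, B` the two maximal witness sizes, `c⁴ = B / A` makes both
maxima equal to `√(A B) ≤ max A B ≤ W(𝒫)`.
-/

noncomputable section

open Finset

variable {q n m : ℕ} {𝓗 : Type*} [NormedAddCommGroup 𝓗] [InnerProductSpace ℂ 𝓗]

/-- `(u, v)` is a converting vector set from `ρ` to `σ` (relative to `X`):
for all `x, y ∈ X`, `⟨ρ_x|ρ_y⟩ − ⟨σ_x|σ_y⟩ = Σ_{j : x_j ≠ y_j} ⟨u_{xj}|v_{yj}⟩`. -/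
def IsCVS (X : Finset (Fin n → Fin q)) (ρ σ : (Fin n → Fin q) → 𝓗)
    (u v : (Fin n → Fin q) → Fin n → EuclideanSpace ℂ (Fin m)) : Prop :=
  ∀ x ∈ X, ∀ y ∈ X,
    (inner ℂ (ρ x) (ρ y) : ℂ) - (inner ℂ (σ x) (σ y) : ℂ) =
      ∑ j ∈ Finset.univ.filter (fun j => x j ≠ y j), (inner ℂ (u x j) (v y j) : ℂ)

/-- positive witness size `w_+(𝒫,x) = Σ_j ‖u_{xj}‖²` (for the `v`-family this is
the negative witness size `w_−`). -/
def wSize (u : (Fin n → Fin q) → Fin n → EuclideanSpace ℂ (Fin m))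
    (x : Fin n → Fin q) : ℝ :=
  ∑ j : Fin n, ‖u x j‖ ^ 2

def rescale (c : ℝ) (u : (Fin n → Fin q) → Fin n → EuclideanSpace ℂ (Fin m)) :
    (Fin n → Fin q) → Fin n → EuclideanSpace ℂ (Fin m) :=
  fun x j => (c : ℂ) • u x j

lemma IsCVS.rescale {X : Finset (Fin n → Fin q)} {ρ σ : (Fin n → Fin q) → 𝓗}
    {u v : (Fin n → Fin q) → Fin n → EuclideanSpace ℂ (Fin m)} (hP : IsCVS X ρ σ u v)
    {c : ℝ} (hc : c ≠ 0) : IsCVS X ρ σ (rescale c u) (rescale c⁻¹ v) := by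
  intro x hx y hy
  rw [hP x hx y hy]
  refine sum_congr rfl fun j _ => ?_
  simp only [_root_.rescale, inner_smul_left, inner_smul_right, Complex.conj_ofReal,
    ← mul_assoc, ← Complex.ofReal_mul, inv_mul_cancel₀ hc, Complex.ofReal_one, one_mul]

lemma wSize_rescale (c : ℝ) (u : (Fin n → Fin q) → Fin n → EuclideanSpace ℂ (Fin m))
    (x : Fin n → Fin q) : wSize (rescale c u) x = c ^ 2 * wSize u x := by
  simp only [wSize, rescale, mul_sum, norm_smul, mul_pow, Complex.norm_real, Real.norm_eq_abs,
    sq_abs]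

lemma sup'_wSize_rescale (X : Finset (Fin n → Fin q)) (hX : X.Nonempty) (c : ℝ)
    (u : (Fin n → Fin q) → Fin n → EuclideanSpace ℂ (Fin m)) :
    X.sup' hX (wSize (rescale c u)) = c ^ 2 * X.sup' hX (wSize u) := by
  rw [mul₀_sup' (sq_nonneg c)]
  exact congrArg _ (funext (wSize_rescale c u))

lemma exists_balancing_scale {A B : ℝ} (hA : 0 < A) (hB : 0 < B) :
    ∃ c : ℝ, c ≠ 0 ∧ c ^ 2 * A = c⁻¹ ^ 2 * B ∧ c ^ 2 * A ≤ max A B := by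
  set t := √(B / A)
  have ht : 0 < t := Real.sqrt_pos.mpr (div_pos hB hA)
  have ht2 : t ^ 2 = B / A := Real.sq_sqrt (div_pos hB hA).le
  have hc2 : √t ^ 2 = t := Real.sq_sqrt ht.le
  have hbal : t * A = t⁻¹ * B := by
    field_simp
    rw [ht2]
    field_simp
  refine ⟨√t, (Real.sqrt_pos.mpr ht).ne', by rw [inv_pow, hc2, hbal], ?_⟩
  rw [hc2]
  have hsq : (t * A) ^ 2 ≤ max A B ^ 2 := by
    calc (t * A) ^ 2 = A * B := by rw [mul_pow, ht2]; field_simp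
      _ ≤ max A B * max A B :=
          mul_le_mul (le_max_left A B) (le_max_right A B) hB.le (hA.le.trans (le_max_left A B))
      _ = max A B ^ 2 := (sq _).symm
  exact le_of_sq_le_sq hsq (hA.le.trans (le_max_left A B))

theorem normalize_cvs_general
    (X : Finset (Fin n → Fin q)) (hX : X.Nonempty)
    (ρ σ : (Fin n → Fin q) → 𝓗)
    (u v : (Fin n → Fin q) → Fin n → EuclideanSpace ℂ (Fin m))
    (hP : IsCVS X ρ σ u v)
    (hplus : 0 < X.sup' hX (wSize u)) (hminus : 0 < X.sup' hX (wSize v)) :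
    ∃ u' v' : (Fin n → Fin q) → Fin n → EuclideanSpace ℂ (Fin m),
      IsCVS X ρ σ u' v' ∧
      X.sup' hX (fun x => max (wSize u' x) (wSize v' x)) ≤
        X.sup' hX (fun x => max (wSize u x) (wSize v x)) ∧
      X.sup' hX (wSize u') = X.sup' hX (wSize v') := by
  obtain ⟨c, hc, hbal, hle⟩ := exists_balancing_scale hplus hminus
  refine ⟨rescale c u, rescale c⁻¹ v, hP.rescale hc, ?_, ?_⟩
  · have hW : max (X.sup' hX (wSize u)) (X.sup' hX (wSize v)) ≤
        X.sup' hX (fun x => max (wSize u x) (wSize v x)) :=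
      max_le (sup'_mono_fun fun x _ => le_max_left _ _)
        (sup'_mono_fun fun x _ => le_max_right _ _)
    refine sup'_le _ _ fun x hx => ?_
    rw [wSize_rescale, wSize_rescale]
    refine max_le ((?_ : _ ≤ c ^ 2 * X.sup' hX (wSize u)).trans (hle.trans hW))
      ((?_ : _ ≤ c⁻¹ ^ 2 * X.sup' hX (wSize v)).trans (hbal ▸ hle.trans hW))
    · exact mul_le_mul_of_nonneg_left (le_sup' _ hx) (sq_nonneg c)
    · exact mul_le_mul_of_nonneg_left (le_sup' _ hx) (sq_nonneg c⁻¹)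
  · rw [sup'_wSize_rescale, sup'_wSize_rescale, hbal]

/-- a converting vector set with nonzero maximal positive and negative
witness sizes can be rebalanced so that the maximal positive and negative witness
sizes agree, without increasing the overall witness size `W`. -/
theorem normalize_cvs (hq : 2 ≤ q) (hn : 1 ≤ n) (hm : 1 ≤ m)
    [FiniteDimensional ℂ 𝓗]
    (X : Finset (Fin n → Fin q)) (hX : X.Nonempty)
    (ρ σ : (Fin n → Fin q) → 𝓗)
    (hρ : ∀ x ∈ X, ‖ρ x‖ = 1) (hσ : ∀ x ∈ X, ‖σ x‖ = 1)
    (u v : (Fin n → Fin q) → Fin n → EuclideanSpace ℂ (Fin m))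
    (hP : IsCVS X ρ σ u v)
    (hplus : 0 < X.sup' hX (wSize u)) (hminus : 0 < X.sup' hX (wSize v)) :
    ∃ u' v' : (Fin n → Fin q) → Fin n → EuclideanSpace ℂ (Fin m),
      IsCVS X ρ σ u' v' ∧
      X.sup' hX (fun x => max (wSize u' x) (wSize v' x)) ≤
        X.sup' hX (fun x => max (wSize u x) (wSize v x)) ∧
      X.sup' hX (wSize u') = X.sup' hX (wSize v') :=
  normalize_cvs_general X hX ρ σ u v hP hplus hminus
end
end

section
/- For every integer q ≥ 2 there exist unit vectors μ_1, …, μ_q and ν_1, …, ν_q in ℂ^q such that for all i, j ∈ [q], ⟨μ_i|ν_j⟩ = (q/(2(q−1)))·(1 − δ_{ij}); in particular ⟨μ_i|ν_i⟩ = 0 for every i. -/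
/-!
Let `u` be the unit vector along `(1, …, 1)` and `f_i = e_i - (1/q)(1, …, 1)`, the vertices of
a regular simplex in `u^⊥`, so that `⟨f_i, f_j⟩ = δ_ij - 1/q`. Put `μ_i = x u + y f_i` and
`ν_j = x u - y f_j` with `x² = 1/2` and `y² = q/(2(q-1))`. Then
`⟨μ_i|ν_j⟩ = 1/2 - y² (δ_ij - 1/q)` and `‖μ_i‖² = ‖ν_i‖² = 1/2 + y² (1 - 1/q)`, and all the
required identities reduce to `y² (1 - 1/q) = 1/2`.
-/

open Finset ComplexConjugate

section OrthogonalSum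

variable {𝕜 E : Type*} [RCLike 𝕜] [NormedAddCommGroup E] [InnerProductSpace 𝕜 E]

theorem inner_smul_add_smul_of_inner_eq_zero {u f g : E} (hf : inner 𝕜 u f = 0)
    (hg : inner 𝕜 u g = 0) (a b a' b' : 𝕜) :
    inner 𝕜 (a • u + b • f) (a' • u + b' • g)
      = conj a * a' * inner 𝕜 u u + conj b * b' * inner 𝕜 f g := by
  simp only [inner_add_left, inner_add_right, inner_smul_left, inner_smul_right, hg,
    inner_eq_zero_symm.1 hf]
  ring

theorem norm_eq_one_of_inner_self_eq_one {x : E} (h : inner 𝕜 x x = 1) : ‖x‖ = 1 := by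
  rw [inner_self_eq_norm_sq_to_K] at h
  exact (pow_eq_one_iff_of_nonneg (norm_nonneg x) two_ne_zero).1 (mod_cast h)

end OrthogonalSum

namespace EuclideanSpace

variable {𝕜 ι : Type*} [RCLike 𝕜] [Fintype ι]

variable (𝕜 ι) in
noncomputable def unitDiagonal : EuclideanSpace 𝕜 ι :=
  WithLp.toLp 2 fun _ => ((√(Fintype.card ι) : ℝ) : 𝕜)⁻¹

theorem inner_unitDiagonal_self [Nonempty ι] :
    inner 𝕜 (unitDiagonal 𝕜 ι) (unitDiagonal 𝕜 ι) = 1 := by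
  have hq : (0 : ℝ) < Fintype.card ι := mod_cast Fintype.card_pos
  simp only [unitDiagonal, PiLp.inner_apply, RCLike.inner_apply, map_inv₀, RCLike.conj_ofReal,
    sum_const, card_univ, nsmul_eq_mul, ← mul_inv, ← RCLike.ofReal_mul, Real.mul_self_sqrt hq.le]
  push_cast
  exact mul_inv_cancel₀ (mod_cast hq.ne')

variable [DecidableEq ι]

def simplexVertex (i : ι) : EuclideanSpace 𝕜 ι :=
  WithLp.toLp 2 fun k => (if k = i then 1 else 0) - (Fintype.card ι : 𝕜)⁻¹

theorem inner_unitDiagonal_simplexVertex (i : ι) :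
    inner 𝕜 (unitDiagonal 𝕜 ι) (simplexVertex i) = 0 := by
  have hq : (Fintype.card ι : 𝕜) ≠ 0 := Nat.cast_ne_zero.2 (Fintype.card_pos_iff.2 ⟨i⟩).ne'
  simp only [unitDiagonal, simplexVertex, PiLp.inner_apply, RCLike.inner_apply, map_inv₀,
    RCLike.conj_ofReal, ← sum_mul, sum_sub_distrib, sum_ite_eq', mem_univ, if_true, sum_const,
    card_univ, nsmul_eq_mul, mul_inv_cancel₀ hq, sub_self, zero_mul]

theorem inner_simplexVertex (i j : ι) :
    inner 𝕜 (simplexVertex i) (simplexVertex j : EuclideanSpace 𝕜 ι)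
      = (if i = j then 1 else 0) - (Fintype.card ι : 𝕜)⁻¹ := by
  have hq : (Fintype.card ι : 𝕜) ≠ 0 := Nat.cast_ne_zero.2 (Fintype.card_pos_iff.2 ⟨i⟩).ne'
  simp only [simplexVertex, PiLp.inner_apply, RCLike.inner_apply, map_sub, map_inv₀, map_natCast,
    apply_ite conj, map_one, map_zero, sub_mul, mul_sub, ite_mul, one_mul, zero_mul, mul_ite,
    mul_one, mul_zero, sum_sub_distrib, sum_ite_eq', mem_univ, if_true, sum_const, card_univ,
    nsmul_eq_mul]
  field_simp
  split_ifs <;> ring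

theorem inner_smul_unitDiagonal_add_smul_simplexVertex (x s t : ℝ) (i j : ι) :
    inner 𝕜 ((x : 𝕜) • unitDiagonal 𝕜 ι + (s : 𝕜) • simplexVertex i)
        ((x : 𝕜) • unitDiagonal 𝕜 ι + (t : 𝕜) • simplexVertex j)
      = ((x * x + s * t * ((if i = j then 1 else 0) - (Fintype.card ι : ℝ)⁻¹) : ℝ) : 𝕜) := by
  have : Nonempty ι := ⟨i⟩
  rw [inner_smul_add_smul_of_inner_eq_zero (inner_unitDiagonal_simplexVertex i)
    (inner_unitDiagonal_simplexVertex j), inner_unitDiagonal_self, inner_simplexVertex,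
    RCLike.conj_ofReal, RCLike.conj_ofReal]
  split_ifs <;> push_cast <;> ring

theorem exists_unit_vectors_inner_eq (h : 2 ≤ Fintype.card ι) :
    ∃ μ ν : ι → EuclideanSpace 𝕜 ι, (∀ i, ‖μ i‖ = 1) ∧ (∀ i, ‖ν i‖ = 1) ∧
      ∀ i j, inner 𝕜 (μ i) (ν j) = (Fintype.card ι : 𝕜) / (2 * ((Fintype.card ι : 𝕜) - 1)) *
        (if i = j then 0 else 1) := by
  have hq : (2 : ℝ) ≤ Fintype.card ι := mod_cast h
  set q : ℝ := (Fintype.card ι : ℝ)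
  set c : ℝ := q / (2 * (q - 1))
  have hc : c * (1 - q⁻¹) = 1 / 2 := by
    have : q - 1 ≠ 0 := by linarith
    simp only [c]
    field_simp
  have hcast : (c : 𝕜) = (Fintype.card ι : 𝕜) / (2 * ((Fintype.card ι : 𝕜) - 1)) := by
    simp only [c, q]
    push_cast
    rfl
  have hx : √(1 / 2) * √(1 / 2) = (1 / 2 : ℝ) := Real.mul_self_sqrt (by norm_num)
  have hy : √c * √c = c := Real.mul_self_sqrt (div_nonneg (by linarith) (by linarith))
  refine ⟨fun i => (√(1 / 2) : 𝕜) • unitDiagonal 𝕜 ι + (√c : 𝕜) • simplexVertex i,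
    fun j => (√(1 / 2) : 𝕜) • unitDiagonal 𝕜 ι + ((-√c : ℝ) : 𝕜) • simplexVertex j,
    fun i => norm_eq_one_of_inner_self_eq_one (𝕜 := 𝕜) ?_,
    fun i => norm_eq_one_of_inner_self_eq_one (𝕜 := 𝕜) ?_, fun i j => ?_⟩
  · rw [inner_smul_unitDiagonal_add_smul_simplexVertex, if_pos rfl, hx, hy, hc]
    norm_num
  · rw [inner_smul_unitDiagonal_add_smul_simplexVertex, if_pos rfl, hx, neg_mul_neg, hy, hc]
    norm_num
  · rw [inner_smul_unitDiagonal_add_smul_simplexVertex, hx, mul_neg, hy, ← hcast]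
    split_ifs
    · rw [neg_mul, hc]
      norm_num
    · rw [mul_one]
      congr 1
      linear_combination -hc

end EuclideanSpace

/-- for every `q ≥ 2` there are unit vectors `μ_1, …, μ_q` and
`ν_1, …, ν_q` in `ℂ^q` with `⟨μ_i|ν_j⟩ = (q/(2(q−1)))·(1 − δ_{ij})`;
in particular `⟨μ_i|ν_i⟩ = 0`. -/
theorem exists_mu_nu (q : ℕ) (hq : 2 ≤ q) :
    ∃ μ ν : Fin q → EuclideanSpace ℂ (Fin q),
      (∀ i, ‖μ i‖ = 1) ∧ (∀ i, ‖ν i‖ = 1) ∧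
      ∀ i j, (inner ℂ (μ i) (ν j) : ℂ) =
        ((q : ℂ) / (2 * ((q : ℂ) - 1))) * (if i = j then 0 else 1) := by
  simpa using EuclideanSpace.exists_unit_vectors_inner_eq (𝕜 := ℂ) (ι := Fin q)
    (by simpa using hq)
end
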